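/- Let $k \le 2r$ with $k = k_0 + k_1$, $k_0, k_1 \le r$, and let $\lambda_0,\dots,\lambda_d$ be the barycentric coordinates of a $d$-simplex $K$ with vertices $V_0,\dots,V_d$. There is no polynomial $u$ of degree at most $k$ on $\mathbb{R}^d$ such that all partial derivatives of $u$ of order $\le r$ vanish at $V_0$ and all partial derivatives of $u - \lambda_0^{k_0}\lambda_1^{k_1}$ of order $\le r$ vanish at $V_1$. -/

import Mathlib

/-!
Restrict everything to the edge `V₀V₁`, parametrised by `t ↦ V₀ + t (V₁ - V₀)`. The restriction
`g` of `u` is a polynomial in `t` of degree at most `k`, and `λ₀`, `λ₁` restrict to `1 - t` and `t`.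
By the chain rule, `g` vanishes to order `r + 1` at `t = 0` and agrees with `(1 - t)^k₀ t^k₁` to
order `r + 1` at `t = 1`. As `k₀ ≤ r`, this forces `g ≠ 0` and `(t - 1)^k₀ ∣ g`, so
`t^(r+1) (t - 1)^k₀ ∣ g` and `k₀ + k₁ ≥ deg g ≥ r + 1 + k₀`, contradicting `k₁ ≤ r`.
-/

open MvPolynomial

/-- Iterated partial derivatives along a list of coordinate directions. -/
noncomputable def pderivs {d : ℕ} (l : List (Fin d)) (u : MvPolynomial (Fin d) ℝ) :
    MvPolynomial (Fin d) ℝ :=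
  l.foldr (fun i p => MvPolynomial.pderiv i p) u

namespace Polynomial

variable {R : Type*}

theorem pow_dvd_of_forall_isRoot_iterate_derivative [CommRing R] [IsDomain R] [CharZero R]
    {q : R[X]} {t : R} {n : ℕ} (h : ∀ m ≤ n, (derivative^[m] q).IsRoot t) :
    (X - C t) ^ (n + 1) ∣ q := by
  rcases eq_or_ne q 0 with rfl | hq
  · exact dvd_zero _
  · exact (le_rootMultiplicity_iff hq).1 (lt_rootMultiplicity_of_isRoot_iterate_derivative hq h)

/-- `(X - C b) ^ rootMultiplicity b p` divides both `p` and `g - p`, hence `g`; and `g ≠ 0` because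
`p` does not vanish to order `n + 1` at `b`. -/
theorem add_rootMultiplicity_le_natDegree [Field R] {g p : R[X]} {a b : R} {n : ℕ} (hab : a ≠ b)
    (ha : (X - C a) ^ (n + 1) ∣ g) (hb : (X - C b) ^ (n + 1) ∣ g - p) (hp : p ≠ 0)
    (hpn : p.rootMultiplicity b ≤ n) :
    n + 1 + p.rootMultiplicity b ≤ g.natDegree := by
  have hg : g ≠ 0 := by
    rintro rfl
    rw [zero_sub, dvd_neg, ← le_rootMultiplicity_iff hp] at hb
    omega
  have hb' : (X - C b) ^ p.rootMultiplicity b ∣ g := by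
    have := (pow_dvd_pow _ (by omega : p.rootMultiplicity b ≤ n + 1)).trans hb
    simpa using dvd_add this (pow_rootMultiplicity_dvd p b)
  have hcop : IsCoprime (X - C a) (X - C b) :=
    isCoprime_X_sub_C_of_isUnit_sub (sub_ne_zero.2 hab).isUnit
  have := natDegree_le_of_dvd (hcop.pow.mul_dvd ha hb') hg
  rwa [natDegree_mul (pow_ne_zero _ (X_sub_C_ne_zero a)) (pow_ne_zero _ (X_sub_C_ne_zero b)),
    natDegree_pow, natDegree_pow, natDegree_X_sub_C, natDegree_X_sub_C, mul_one, mul_one] at this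

theorem rootMultiplicity_one_one_sub_X_pow_mul_X_pow [CommRing R] [IsDomain R] (k₀ k₁ : ℕ) :
    ((1 - X : R[X]) ^ k₀ * X ^ k₁).rootMultiplicity 1 = k₀ := by
  have hfactor : (1 - X : R[X]) ^ k₀ * X ^ k₁ = (X - C 1) ^ k₀ * ((-1) ^ k₀ * X ^ k₁) := by
    rw [C_1, ← mul_assoc, ← mul_pow]; ring
  have hne : (-1 : R[X]) ^ k₀ * X ^ k₁ ≠ 0 := mul_ne_zero (pow_ne_zero _ (by simp)) (by simp)
  rw [hfactor, rootMultiplicity_mul (mul_ne_zero (pow_ne_zero _ (X_sub_C_ne_zero 1)) hne),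
    rootMultiplicity_X_sub_C_pow, rootMultiplicity_eq_zero (by simp), add_zero]

end Polynomial

namespace MvPolynomial

variable {R σ : Type*}

theorem eval_aeval [CommSemiring R] (f : σ → Polynomial R) (t : R) (q : MvPolynomial σ R) :
    (aeval f q).eval t = eval (fun i => (f i).eval t) q := by
  simpa [Polynomial.coe_aeval_eq_eval, coe_aeval_eq_eval] using
    DFunLike.congr_fun (comp_aeval f (Polynomial.aeval t)) q

theorem derivative_aeval [CommSemiring R] [Fintype σ] (f : σ → Polynomial R)
    (q : MvPolynomial σ R) :
    Polynomial.derivative (aeval f q) =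
      ∑ i, Polynomial.derivative (f i) * aeval f (pderiv i q) := by
  induction q using MvPolynomial.induction_on with
  | C a => simp
  | add p q hp hq => simp [hp, hq, mul_add, Finset.sum_add_distrib]
  | mul_X p i hp =>
    simp only [map_mul, aeval_X, Polynomial.derivative_mul, hp, Derivation.leibniz, smul_eq_mul,
      map_add, mul_add, Finset.sum_add_distrib, Finset.sum_mul]
    rw [add_comm]
    congr 1
    · classical
      simp [pderiv_X, Pi.single_apply, mul_comm]
    · exact Finset.sum_congr rfl fun j _ => by ring

theorem natDegree_aeval_le_totalDegree [CommSemiring R] (f : σ → Polynomial R)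
    (hf : ∀ i, (f i).natDegree ≤ 1) (q : MvPolynomial σ R) :
    (aeval f q).natDegree ≤ q.totalDegree := by
  conv_lhs => rw [q.as_sum, map_sum]
  refine Polynomial.natDegree_sum_le_of_forall_le _ _ fun m hm => ?_
  rw [aeval_monomial, ← Polynomial.C_eq_algebraMap]
  refine (Polynomial.natDegree_C_mul_le _ _).trans <| (Polynomial.natDegree_prod_le _ _).trans <|
    le_trans ?_ (le_totalDegree hm)
  exact Finset.sum_le_sum fun i _ =>
    Polynomial.natDegree_pow_le.trans (by simpa using Nat.mul_le_mul_left (m i) (hf i))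

end MvPolynomial

noncomputable def lineMapPoly {R σ : Type*} [CommRing R] (a b : σ → R) : σ → Polynomial R :=
  fun i => Polynomial.C (b i - a i) * Polynomial.X + Polynomial.C (a i)

section lineMapPoly

open Polynomial (derivative)

variable {R σ : Type*} [CommRing R] (a b : σ → R)

theorem natDegree_lineMapPoly_le (i : σ) : (lineMapPoly a b i).natDegree ≤ 1 :=
  Polynomial.natDegree_linear_le

theorem derivative_lineMapPoly (i : σ) :
    derivative (lineMapPoly a b i) = Polynomial.C (b i - a i) := by
  simp [lineMapPoly]

theorem eval_zero_lineMapPoly : (fun i => (lineMapPoly a b i).eval 0) = a := by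
  ext i; simp [lineMapPoly]

theorem eval_one_lineMapPoly : (fun i => (lineMapPoly a b i).eval 1) = b := by
  ext i; simp [lineMapPoly]

theorem aeval_lineMapPoly_of_totalDegree_le_one {q : MvPolynomial σ R} (hq : q.totalDegree ≤ 1) :
    aeval (lineMapPoly a b) q =
      Polynomial.C (eval b q - eval a q) * Polynomial.X + Polynomial.C (eval a q) := by
  set L := aeval (lineMapPoly a b) q
  have hL : L = Polynomial.C (L.coeff 1) * Polynomial.X + Polynomial.C (L.coeff 0) :=
    Polynomial.eq_X_add_C_of_natDegree_le_one
      ((natDegree_aeval_le_totalDegree _ (natDegree_lineMapPoly_le a b) q).trans hq)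
  have h0 : L.eval 0 = eval a q := by rw [eval_aeval, eval_zero_lineMapPoly]
  have h1 : L.eval 1 = eval b q := by rw [eval_aeval, eval_one_lineMapPoly]
  rw [hL] at h0 h1 ⊢
  simp only [Polynomial.eval_add, Polynomial.eval_mul, Polynomial.eval_C, Polynomial.eval_X,
    mul_zero, zero_add, mul_one] at h0 h1
  rw [← h0, ← h1, add_sub_cancel_right]

end lineMapPoly

theorem pderivs_append_singleton {d : ℕ} (l : List (Fin d)) (i : Fin d)
    (u : MvPolynomial (Fin d) ℝ) :
    pderivs (l ++ [i]) u = pderivs l (pderiv i u) := by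
  simp [pderivs, List.foldr_append]

section restriction

open Polynomial (derivative)

variable {d : ℕ} (a b : Fin d → ℝ) (t : ℝ)

theorem eval_iterate_derivative_aeval_lineMapPoly (n : ℕ) (q : MvPolynomial (Fin d) ℝ)
    (h : ∀ l : List (Fin d), l.length ≤ n →
      eval (fun i => (lineMapPoly a b i).eval t) (pderivs l q) = 0) :
    (derivative^[n] (aeval (lineMapPoly a b) q)).eval t = 0 := by
  induction n generalizing q with
  | zero => simpa [pderivs, eval_aeval] using h [] le_rfl
  | succ n ih =>
    rw [Function.iterate_succ_apply, derivative_aeval, Polynomial.iterate_derivative_sum,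
      Polynomial.eval_finsetSum]
    refine Finset.sum_eq_zero fun i _ => ?_
    rw [derivative_lineMapPoly, Polynomial.iterate_derivative_C_mul, Polynomial.eval_mul,
      ih _ fun l hl => ?_, mul_zero]
    rw [← pderivs_append_singleton]
    exact h _ (by simpa using hl)

theorem pow_dvd_aeval_lineMapPoly {n : ℕ} {q : MvPolynomial (Fin d) ℝ}
    (h : ∀ l : List (Fin d), l.length ≤ n →
      eval (fun i => (lineMapPoly a b i).eval t) (pderivs l q) = 0) :
    (Polynomial.X - Polynomial.C t) ^ (n + 1) ∣ aeval (lineMapPoly a b) q :=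
  Polynomial.pow_dvd_of_forall_isRoot_iterate_derivative fun m hm =>
    eval_iterate_derivative_aeval_lineMapPoly a b t m q fun l hl => h l (hl.trans hm)

end restriction

/-- with `k = k₀ + k₁ ≤ 2r`, there is no polynomial `u` of degree `≤ k` whose
derivatives of order `≤ r` all vanish at `V₀` while those of `u - λ₀^{k₀} λ₁^{k₁}`
all vanish at `V₁`. -/
theorem stmt6 (d k r k0 k1 : ℕ) (hd : 1 ≤ d)
    (hk : k = k0 + k1) (hk0 : k0 ≤ r) (hk1 : k1 ≤ r)
    (V : Fin (d + 1) → (Fin d → ℝ))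
    (lam : Fin (d + 1) → MvPolynomial (Fin d) ℝ)
    (hdeg : ∀ i, (lam i).totalDegree ≤ 1)
    (hval : ∀ i j, MvPolynomial.eval (V j) (lam i) = if i = j then 1 else 0) :
    ¬ ∃ u : MvPolynomial (Fin d) ℝ, u.totalDegree ≤ k ∧
      (∀ l : List (Fin d), l.length ≤ r →
        MvPolynomial.eval (V 0) (pderivs l u) = 0) ∧
      (∀ l : List (Fin d), l.length ≤ r →
        MvPolynomial.eval (V ⟨1, by omega⟩)
          (pderivs l (u - lam 0 ^ k0 * lam ⟨1, by omega⟩ ^ k1)) = 0) := by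
  rintro ⟨u, hu, h0, h1⟩
  set i1 : Fin (d + 1) := ⟨1, by omega⟩
  have h01 : (0 : Fin (d + 1)) ≠ i1 := Fin.ne_of_val_ne zero_ne_one
  set γ := lineMapPoly (V 0) (V i1)
  have hlam0 : aeval γ (lam 0) = 1 - Polynomial.X := by
    rw [aeval_lineMapPoly_of_totalDegree_le_one _ _ (hdeg 0), hval, hval]
    simp [h01, sub_eq_neg_add]
  have hlam1 : aeval γ (lam i1) = Polynomial.X := by
    rw [aeval_lineMapPoly_of_totalDegree_le_one _ _ (hdeg i1), hval, hval]
    simp [h01.symm]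
  have hg0 : (Polynomial.X - Polynomial.C 0) ^ (r + 1) ∣ aeval γ u :=
    pow_dvd_aeval_lineMapPoly _ _ 0 (by rwa [eval_zero_lineMapPoly])
  have hg1 : (Polynomial.X - Polynomial.C 1) ^ (r + 1) ∣
      aeval γ u - (1 - Polynomial.X) ^ k0 * Polynomial.X ^ k1 := by
    have := pow_dvd_aeval_lineMapPoly (V 0) (V i1) 1 (q := u - lam 0 ^ k0 * lam i1 ^ k1)
      (by rwa [eval_one_lineMapPoly])
    rwa [map_sub, map_mul, map_pow, map_pow, hlam0, hlam1] at this
  have hmult := Polynomial.rootMultiplicity_one_one_sub_X_pow_mul_X_pow (R := ℝ) k0 k1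
  have hdeg_lower := Polynomial.add_rootMultiplicity_le_natDegree zero_ne_one hg0 hg1
    (fun h => by simpa using congrArg (Polynomial.eval (-1)) h) (by rw [hmult]; exact hk0)
  have hdeg_upper := (natDegree_aeval_le_totalDegree γ (natDegree_lineMapPoly_le _ _) u).trans hu
  omega
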